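/- Let n ≥ 2 and let n₁, n₂ be positive divisors of n. Suppose there exist integers c₁, c₂, c₃ with gcd(c₁, n₁) = 1, gcd(c₂, n₂) = 1, gcd(c₃, n) = 1 and (n/n₁)·c₁ + (n/n₂)·c₂ + c₃ ≡ 0 (mod n). Then n − n/n₁ − n/n₂ + 1 is even. -/

import Mathlib

/-!
If `n` is odd, so are its divisors `n / n₁` and `n / n₂`, and the parity count is immediate.
If `n` is even, then `c₃` is odd, and `(n / n₁) c₁ ≡ n / n₁ (mod 2)`: when `n / n₁` is odd, `n₁`
must be even, forcing `c₁` to be odd. Reducing the congruence modulo `2` then shows that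
`n / n₁ + n / n₂ + 1` is even.
-/

theorem IsCoprime.odd_of_even {c m : ℤ} (h : IsCoprime c m) (hm : Even m) : Odd c :=
  Int.isCoprime_two_right.mp (h.of_isCoprime_of_dvd_right hm.two_dvd)

theorem Int.odd_ediv_of_odd {m n : ℤ} (hm : m ∣ n) (hn : Odd n) : Odd (n / m) :=
  (Int.odd_mul.mp (by rwa [Int.mul_ediv_cancel' hm])).2

theorem Int.even_ediv_mul_sub_ediv {m n c : ℤ} (hc : IsCoprime c m) (hm : m ∣ n) (hn : Even n) :
    Even (n / m * c - n / m) := by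
  rcases Int.even_or_odd (n / m) with hq | hq
  · exact (hq.mul_right c).sub hq
  · have hm_even : Even m := by
      rw [← Int.mul_ediv_cancel' hm] at hn
      exact (Int.even_mul.mp hn).resolve_right (Int.not_even_iff_odd.mpr hq)
    exact (hq.mul (hc.odd_of_even hm_even)).sub_odd hq

theorem stmt_8_general (n n₁ n₂ : ℤ)
    (hd₁ : n₁ ∣ n) (hd₂ : n₂ ∣ n)
    (h : ∃ c₁ c₂ c₃ : ℤ, Int.gcd c₁ n₁ = 1 ∧ Int.gcd c₂ n₂ = 1 ∧ Int.gcd c₃ n = 1 ∧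
      (n / n₁) * c₁ + (n / n₂) * c₂ + c₃ ≡ 0 [ZMOD n]) :
    Even (n - n / n₁ - n / n₂ + 1) := by
  obtain ⟨c₁, c₂, c₃, g₁, g₂, g₃, hc⟩ := h
  rcases Int.even_or_odd n with hn | hn
  · have e₁ := Int.even_ediv_mul_sub_ediv (Int.isCoprime_iff_gcd_eq_one.mpr g₁) hd₁ hn
    have e₂ := Int.even_ediv_mul_sub_ediv (Int.isCoprime_iff_gcd_eq_one.mpr g₂) hd₂ hn
    have e₃ : Even (c₃ + 1) := ((Int.isCoprime_iff_gcd_eq_one.mpr g₃).odd_of_even hn).add_one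
    have hsum : Even ((n / n₁) * c₁ + (n / n₂) * c₂ + c₃) :=
      even_iff_two_dvd.mpr (hn.two_dvd.trans (Int.modEq_zero_iff_dvd.mp hc))
    have hsplit : n - n / n₁ - n / n₂ + 1 = n - ((n / n₁) * c₁ + (n / n₂) * c₂ + c₃)
        + (n / n₁ * c₁ - n / n₁) + (n / n₂ * c₂ - n / n₂) + (c₃ + 1) := by ring
    rw [hsplit]
    exact (((hn.sub hsum).add e₁).add e₂).add e₃
  · exact ((hn.sub_odd (Int.odd_ediv_of_odd hd₁ hn)).sub_odd (Int.odd_ediv_of_odd hd₂ hn)).add_one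

theorem stmt_8 (n n₁ n₂ : ℤ) (hn : 2 ≤ n) (h₁ : 0 < n₁) (h₂ : 0 < n₂)
    (hd₁ : n₁ ∣ n) (hd₂ : n₂ ∣ n)
    (h : ∃ c₁ c₂ c₃ : ℤ, Int.gcd c₁ n₁ = 1 ∧ Int.gcd c₂ n₂ = 1 ∧ Int.gcd c₃ n = 1 ∧
      (n / n₁) * c₁ + (n / n₂) * c₂ + c₃ ≡ 0 [ZMOD n]) :
    Even (n - n / n₁ - n / n₂ + 1) :=
  stmt_8_general n n₁ n₂ hd₁ hd₂ h
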